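/- Let h > 0 and let u be a continuous real-valued function on the open strip S = {z ∈ ℂ : |Im z| < h} such that u is subharmonic on the open upper half-strip {0 < Im z < h} and on the open lower half-strip {−h < Im z < 0}, u = 0 on the real axis, and there is a sequence h_m ↓ 0 with 0 < h_m < h such that u ≥ 0 on the two horizontal lines {Im z = h_m} and {Im z = −h_m} for every m. Then u is subharmonic on all of S. -/

import Mathlib

/-
STATEMENT 11: Let h > 0 and let u be a continuous real-valued function on the open
strip S = {z : |Im z| < h} such that u is subharmonic on the open upper half-strip
{0 < Im z < h} and on the open lower half-strip {−h < Im z < 0}, u = 0 on the real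
axis, and there is a sequence h_m ↓ 0 with 0 < h_m < h such that u ≥ 0 on the two
horizontal lines {Im z = h_m} and {Im z = −h_m} for every m. Then u is subharmonic
on all of S.
-/

noncomputable section

open Filter Set

/-- `u` is subharmonic on the open set `U`: upper semicontinuous together with the
sub-mean value inequality on every closed disk contained in `U`. -/
def IsSubharmonicOn (u : ℂ → ℝ) (U : Set ℂ) : Prop :=
  UpperSemicontinuousOn u U ∧
  ∀ z ∈ U, ∀ ρ : ℝ, 0 < ρ → Metric.closedBall z ρ ⊆ U →
    u z ≤ (1 / (2 * Real.pi)) *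
      ∫ θ in (0:ℝ)..(2 * Real.pi), u (z + ρ * Complex.exp (θ * Complex.I))

namespace SubhGlue

open Metric Complex intervalIntegral MeasureTheory

/-! ### Auxiliary lemmas -/

lemma circle_integrable' {f : ℂ → ℝ} {s : Set ℂ} (hf : ContinuousOn f s) (p : ℂ) (r : ℝ)
    (hsub : ∀ θ : ℝ, p + r * Complex.exp (θ * Complex.I) ∈ s) :
    IntervalIntegrable (fun θ : ℝ => f (p + r * Complex.exp (θ * Complex.I)))
      volume 0 (2 * Real.pi) := by
  apply ContinuousOn.intervalIntegrable
  apply ContinuousOn.comp hf _ (fun θ _ => hsub θ)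
  fun_prop

lemma holo_circle_integral (F : ℂ → ℂ) (hF : Differentiable ℂ F) (c : ℂ) {r : ℝ} (hr : 0 < r) :
    (∫ θ in (0:ℝ)..(2 * Real.pi), F (c + r * Complex.exp (θ * Complex.I)))
      = (2 * Real.pi : ℂ) * F c := by
  have h1 : (∮ z in C(c, r), (z - c)⁻¹ • F z) = (2 * Real.pi * Complex.I : ℂ) • F c :=
    (hF.diffContOnCl).circleIntegral_sub_inv_smul (Metric.mem_ball_self hr)
  rw [circleIntegral] at h1
  have h2 : ∀ θ : ℝ, deriv (circleMap c r) θ • (circleMap c r θ - c)⁻¹ • F (circleMap c r θ)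
      = Complex.I * F (c + r * Complex.exp (θ * Complex.I)) := by
    intro θ
    rw [deriv_circleMap]
    simp only [circleMap, smul_eq_mul, circleMap_zero]
    have hne : (r : ℂ) * Complex.exp (θ * Complex.I) ≠ 0 := by
      apply mul_ne_zero
      · exact_mod_cast hr.ne'
      · exact Complex.exp_ne_zero _
    rw [show c + (r:ℂ) * Complex.exp (θ * Complex.I) - c = (r:ℂ) * Complex.exp (θ * Complex.I) by ring,
      mul_comm _ I, mul_assoc, zero_add, mul_inv_cancel_left₀ hne]
  simp only [h2] at h1
  rw [intervalIntegral.integral_const_mul] at h1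
  have hI : (Complex.I : ℂ) ≠ 0 := Complex.I_ne_zero
  apply mul_left_cancel₀ hI
  rw [h1, smul_eq_mul]; ring

lemma fourier_approx (ψ : ℝ → ℝ) (hψ : Continuous ψ)
    (hper : Function.Periodic ψ (2 * Real.pi)) {ε : ℝ} (hε : 0 < ε) :
    ∃ cc : ℤ →₀ ℂ, ∀ θ : ℝ,
      |ψ θ - (cc.sum fun n a => a * Complex.exp (n * θ * Complex.I)).re| ≤ ε := by
  haveI : Fact (0 < 2 * Real.pi) := ⟨by positivity⟩
  set T := 2 * Real.pi with hT
  have hlift : Continuous fun x : AddCircle T => ((hper.lift x : ℝ) : ℂ) :=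
    Complex.continuous_ofReal.comp <| continuous_quot_lift _ hψ
  set Ψ : C(AddCircle T, ℂ) := ⟨_, hlift⟩ with hΨ
  have hmem : Ψ ∈ closure ((Submodule.span ℂ (Set.range (@fourier T))) : Set C(AddCircle T, ℂ)) := by
    have h := span_fourier_closure_eq_top (T := T)
    have h2 : Ψ ∈ (Submodule.span ℂ (Set.range (@fourier T))).topologicalClosure := by
      rw [h]; trivial
    exact h2
  obtain ⟨g, hg_mem, hg_close⟩ := Metric.mem_closure_iff.1 hmem ε hε
  rw [SetLike.mem_coe, Finsupp.mem_span_range_iff_exists_finsupp] at hg_mem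
  obtain ⟨cc, hcc⟩ := hg_mem
  refine ⟨cc, fun θ => ?_⟩
  have h2 : g (θ : AddCircle T) = cc.sum fun n a => a * Complex.exp (n * θ * Complex.I) := by
    rw [← hcc, Finsupp.sum, Finsupp.sum, ContinuousMap.coe_sum, Finset.sum_apply]
    refine Finset.sum_congr rfl fun n _ => ?_
    have : (fourier n : C(AddCircle T, ℂ)) (θ : AddCircle T)
        = Complex.exp (n * θ * Complex.I) := by
      rw [fourier_coe_apply]
      congr 1
      have hπ : (Real.pi : ℂ) ≠ 0 := by exact_mod_cast Real.pi_ne_zero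
      rw [hT]
      push_cast
      field_simp
    simp [this]
  have h1 : dist (Ψ (θ : AddCircle T)) (g (θ : AddCircle T)) ≤ dist Ψ g :=
    ContinuousMap.dist_apply_le_dist _
  have hΨθ : Ψ (θ : AddCircle T) = (ψ θ : ℂ) := by
    simp [hΨ, Function.Periodic.lift_coe]
  rw [hΨθ, h2] at h1
  rw [Complex.dist_eq] at h1
  have h3 : |ψ θ - (cc.sum fun n a => a * Complex.exp (n * θ * Complex.I)).re|
      ≤ ‖(ψ θ : ℂ) - cc.sum fun n a => a * Complex.exp (n * θ * Complex.I)‖ := by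
    have := Complex.abs_re_le_norm
      ((ψ θ : ℂ) - cc.sum fun n a => a * Complex.exp (n * θ * Complex.I))
    simpa using this
  exact h3.trans (h1.trans hg_close.le)

lemma normSq_circle_mean (p c : ℂ) (r : ℝ) :
    (∫ θ in (0:ℝ)..(2 * Real.pi), Complex.normSq (p + r * Complex.exp (θ * Complex.I) - c))
      = 2 * Real.pi * (Complex.normSq (p - c) + r ^ 2) := by
  have key : ∀ θ : ℝ, Complex.normSq (p + r * Complex.exp (θ * Complex.I) - c)
      = (Complex.normSq (p - c) + r ^ 2)
        + (2 * r * (p - c).re) * Real.cos θ + (2 * r * (p - c).im) * Real.sin θ := by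
    intro θ
    have hexp : (Complex.exp (θ * Complex.I)) = Complex.ofReal (Real.cos θ)
        + Complex.ofReal (Real.sin θ) * Complex.I := by
      rw [Complex.exp_mul_I, ← Complex.ofReal_cos, ← Complex.ofReal_sin]
    have : p + r * Complex.exp (θ * Complex.I) - c
        = (p - c) + r * Complex.exp (θ * Complex.I) := by ring
    rw [this, hexp]
    simp [Complex.normSq_apply, Complex.add_re, Complex.add_im, Complex.mul_re, Complex.mul_im,
      Complex.cos_ofReal_re, Complex.sin_ofReal_re]
    nlinarith [Real.sin_sq_add_cos_sq θ]
  simp_rw [key]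
  rw [intervalIntegral.integral_add, intervalIntegral.integral_add]
  · rw [intervalIntegral.integral_const, intervalIntegral.integral_const_mul,
      intervalIntegral.integral_const_mul, integral_cos, integral_sin]
    simp [Real.sin_two_pi, Real.cos_two_pi]
    try ring
  · exact (continuous_const.intervalIntegrable _ _)
  · exact ((continuous_const.mul Real.continuous_cos).intervalIntegrable _ _)
  · exact (((continuous_const.intervalIntegrable _ _).add
      ((continuous_const.mul Real.continuous_cos).intervalIntegrable _ _)))
  · exact ((continuous_const.mul Real.continuous_sin).intervalIntegrable _ _)

lemma max_principle (f : ℂ → ℝ) (c : ℂ) (R : ℝ) (hR : 0 < R)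
    (hf : ContinuousOn f (Metric.closedBall c R))
    (hsub : ∀ p ∈ Metric.ball c R, ∀ δ > 0, ∃ r, 0 < r ∧ r < δ ∧
      Metric.closedBall p r ⊆ Metric.ball c R ∧
      f p ≤ (1 / (2 * Real.pi)) *
        ∫ θ in (0:ℝ)..(2 * Real.pi), f (p + r * Complex.exp (θ * Complex.I)))
    (M : ℝ) (hM : ∀ q ∈ Metric.sphere c R, f q ≤ M) :
    ∀ p ∈ Metric.closedBall c R, f p ≤ M := by
  have hπ : 0 < 2 * Real.pi := by positivity
  have key : ∀ ε > 0, ∀ p ∈ Metric.closedBall c R, f p ≤ M + ε * R ^ 2 := by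
    intro ε hε p hp
    set g : ℂ → ℝ := fun z => f z + ε * Complex.normSq (z - c) with hg
    have hgc : ContinuousOn g (Metric.closedBall c R) := by
      apply hf.add
      exact (continuous_const.mul ((Complex.continuous_normSq).comp
        (continuous_id.sub continuous_const))).continuousOn
    obtain ⟨p₀, hp₀cb, hp₀max⟩ := (isCompact_closedBall c R).exists_isMaxOn
      ⟨c, Metric.mem_closedBall_self hR.le⟩ hgc
    have hmax : ∀ y ∈ Metric.closedBall c R, g y ≤ g p₀ := hp₀max
    by_cases hcase : p₀ ∈ Metric.ball c R
    · exfalso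
      obtain ⟨r, hr0, hr1, hrsub, hrmean⟩ := hsub p₀ hcase 1 one_pos
      have hcirc : ∀ θ : ℝ, p₀ + r * Complex.exp (θ * Complex.I) ∈ Metric.closedBall c R := by
        intro θ
        apply Metric.ball_subset_closedBall
        apply hrsub
        rw [Metric.mem_closedBall, Complex.dist_eq]
        have : p₀ + r * Complex.exp (θ * Complex.I) - p₀ = r * Complex.exp (θ * Complex.I) := by
          ring
        rw [this]
        rw [norm_mul]
        simp [Complex.norm_exp, abs_of_pos hr0]
      have hfint : IntervalIntegrable (fun θ : ℝ => f (p₀ + r * Complex.exp (θ * Complex.I)))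
          volume 0 (2 * Real.pi) := circle_integrable' hf p₀ r hcirc
      have hqint : IntervalIntegrable
          (fun θ : ℝ => Complex.normSq (p₀ + r * Complex.exp (θ * Complex.I) - c))
          volume 0 (2 * Real.pi) := by
        apply Continuous.intervalIntegrable
        exact Complex.continuous_normSq.comp (by continuity)
      have hgint : IntervalIntegrable (fun θ : ℝ => g (p₀ + r * Complex.exp (θ * Complex.I)))
          volume 0 (2 * Real.pi) := hfint.add (hqint.const_mul ε)
      have h1 : (∫ θ in (0:ℝ)..(2 * Real.pi), g (p₀ + r * Complex.exp (θ * Complex.I)))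
          ≤ 2 * Real.pi * g p₀ := by
        have hh := intervalIntegral.integral_mono_on (by positivity : (0:ℝ) ≤ 2 * Real.pi) hgint
          (_root_.intervalIntegrable_const (c := g p₀))
          (fun θ _ => hmax _ (hcirc θ))
        rwa [intervalIntegral.integral_const, sub_zero, smul_eq_mul] at hh
      have h2 : (∫ θ in (0:ℝ)..(2 * Real.pi), g (p₀ + r * Complex.exp (θ * Complex.I)))
          = (∫ θ in (0:ℝ)..(2 * Real.pi), f (p₀ + r * Complex.exp (θ * Complex.I)))
            + ε * (2 * Real.pi * (Complex.normSq (p₀ - c) + r ^ 2)) := by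
        rw [hg]
        rw [intervalIntegral.integral_add hfint (hqint.const_mul ε),
          intervalIntegral.integral_const_mul, normSq_circle_mean]
      have h3 : 2 * Real.pi * f p₀ ≤
          (∫ θ in (0:ℝ)..(2 * Real.pi), f (p₀ + r * Complex.exp (θ * Complex.I))) := by
        have h' := hrmean
        rw [div_mul_eq_mul_div, one_mul] at h'
        have h'' := (le_div_iff₀ hπ).1 h'
        linarith
      have hεr : 0 < ε * (2 * Real.pi * r ^ 2) := by positivity
      have : g p₀ = f p₀ + ε * Complex.normSq (p₀ - c) := rfl
      nlinarith [h1, h2, h3]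
    · have hps : p₀ ∈ Metric.sphere c R := by
        rcases Metric.mem_closedBall.1 hp₀cb |>.lt_or_eq with hlt | heq
        · exact absurd (Metric.mem_ball.2 hlt) hcase
        · exact Metric.mem_sphere.2 heq
      have hnsq : Complex.normSq (p₀ - c) = R ^ 2 := by
        have : ‖p₀ - c‖ = R := by
          rw [← Complex.dist_eq]; exact Metric.mem_sphere.1 hps
        rw [← Complex.sq_norm, this]
      have hfp : f p ≤ g p := by
        have : 0 ≤ ε * Complex.normSq (p - c) := mul_nonneg hε.le (Complex.normSq_nonneg _)
        simp only [hg]; linarith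
      have : f p ≤ g p₀ := le_trans hfp (hmax p hp)
      rw [hg] at this
      simp only at this
      rw [hnsq] at this
      linarith [hM p₀ hps]
  intro p hp
  by_contra hcon
  push_neg at hcon
  have hR2 : (0:ℝ) < R ^ 2 := by positivity
  have hd : 0 < (f p - M) / (2 * R ^ 2) := div_pos (by linarith) (by positivity)
  have := key _ hd p hp
  have hhalf : R ^ 2 / (2 * R ^ 2) = 1 / 2 := by
    field_simp
  rw [div_mul_eq_mul_div, mul_div_assoc, hhalf] at this
  linarith

lemma global_submean (f : ℂ → ℝ) (c : ℂ) (R : ℝ) (hR : 0 < R)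
    (hf : ContinuousOn f (Metric.closedBall c R))
    (hsub : ∀ p ∈ Metric.ball c R, ∀ δ > 0, ∃ r, 0 < r ∧ r < δ ∧
      Metric.closedBall p r ⊆ Metric.ball c R ∧
      f p ≤ (1 / (2 * Real.pi)) *
        ∫ θ in (0:ℝ)..(2 * Real.pi), f (p + r * Complex.exp (θ * Complex.I))) :
    f c ≤ (1 / (2 * Real.pi)) *
      ∫ θ in (0:ℝ)..(2 * Real.pi), f (c + R * Complex.exp (θ * Complex.I)) := by
  have hπ : (0:ℝ) < 2 * Real.pi := by positivity
  have hRne : (R:ℂ) ≠ 0 := by exact_mod_cast hR.ne'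
  set ψ : ℝ → ℝ := fun θ => f (c + R * Complex.exp (θ * Complex.I)) with hψdef
  have hγ : ∀ θ : ℝ, c + R * Complex.exp (θ * Complex.I) ∈ Metric.closedBall c R := by
    intro θ
    rw [Metric.mem_closedBall, Complex.dist_eq]
    have : c + R * Complex.exp (θ * Complex.I) - c = R * Complex.exp (θ * Complex.I) := by ring
    rw [this, norm_mul]
    simp [Complex.norm_exp, abs_of_pos hR]
  have hψcont : Continuous ψ :=
    hf.comp_continuous (by fun_prop) hγ
  have hψper : Function.Periodic ψ (2 * Real.pi) := by
    intro θ
    simp only [hψdef]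
    congr 2
    push_cast
    rw [add_mul, Complex.exp_add]
    rw [Complex.exp_two_pi_mul_I]
    ring
  have hψint : IntervalIntegrable ψ volume 0 (2 * Real.pi) :=
    hψcont.intervalIntegrable _ _
  have key : ∀ ε : ℝ, 0 < ε → f c ≤ ((1 / (2 * Real.pi)) *
      ∫ θ in (0:ℝ)..(2 * Real.pi), f (c + R * Complex.exp (θ * Complex.I))) + 2 * ε := by
    intro ε hε
    obtain ⟨cc, hcc⟩ := fourier_approx ψ hψcont hψper hε
    set F : ℂ → ℂ := fun z =>
      (∑ n ∈ cc.support, (if 0 ≤ n then cc n else (starRingEnd ℂ) (cc n))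
        * ((z - c) / R) ^ n.natAbs) + (ε : ℂ) with hFdef
    have hFdiff : Differentiable ℂ F := by
      apply Differentiable.add _ (differentiable_const _)
      apply Differentiable.fun_sum
      intro n _
      exact (((differentiable_id.sub (differentiable_const c)).div_const (R:ℂ)).pow _).const_mul _
    have hFbd : ∀ θ : ℝ, (F (c + R * Complex.exp (θ * Complex.I))).re
        = (cc.sum fun n a => a * Complex.exp (n * θ * Complex.I)).re + ε := by
      intro θ
      have hquot : ((c + R * Complex.exp (θ * Complex.I) - c) / R)
          = Complex.exp (θ * Complex.I) := by
        field_simp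
        ring
      simp only [hFdef, hquot]
      rw [Complex.add_re, Complex.ofReal_re]
      congr 1
      rw [Finsupp.sum, Complex.re_sum, Complex.re_sum]
      refine Finset.sum_congr rfl fun n _ => ?_
      rcases le_or_gt 0 n with hn | hn
      · rw [if_pos hn]
        congr 2
        rw [← Complex.exp_nat_mul]
        congr 1
        have : ((n.natAbs : ℂ)) = (n : ℂ) := by
          rw [← Int.cast_natCast (R := ℂ) n.natAbs, Int.natAbs_of_nonneg hn]
        rw [this]; ring
      · rw [if_neg (not_le.2 hn)]
        have h1 : ((starRingEnd ℂ) (cc n)) * Complex.exp (θ * Complex.I) ^ n.natAbs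
            = (starRingEnd ℂ) (cc n * Complex.exp (n * θ * Complex.I)) := by
          rw [map_mul]
          congr 1
          rw [← Complex.exp_nat_mul, ← Complex.exp_conj]
          congr 1
          have : ((n.natAbs : ℂ)) = -(n : ℂ) := by
            rw [← Int.cast_natCast (R := ℂ) n.natAbs]
            exact_mod_cast congrArg (Int.cast : ℤ → ℂ) (by omega : (n.natAbs : ℤ) = -n)
          rw [this]
          have hθI : (starRingEnd ℂ) ((n:ℂ) * θ * Complex.I) = -((n:ℂ) * θ * Complex.I) := by
            rw [map_mul, map_mul, Complex.conj_I, map_intCast, Complex.conj_ofReal]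
            ring
          rw [hθI]; ring
        rw [h1, Complex.conj_re]
    have hFmean : ∀ (p : ℂ) (r : ℝ), 0 < r →
        (∫ θ in (0:ℝ)..(2 * Real.pi), (F (p + r * Complex.exp (θ * Complex.I))).re)
          = 2 * Real.pi * (F p).re := by
      intro p r hr
      have hint : IntervalIntegrable (fun θ : ℝ => F (p + r * Complex.exp (θ * Complex.I)))
          volume 0 (2 * Real.pi) :=
        (hFdiff.continuous.comp (by fun_prop)).intervalIntegrable _ _
      have hcomm := Complex.reCLM.intervalIntegral_comp_comm hint
      have : (∫ θ in (0:ℝ)..(2 * Real.pi), Complex.reCLM (F (p + r * Complex.exp (θ * Complex.I))))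
          = Complex.reCLM (∫ θ in (0:ℝ)..(2 * Real.pi), F (p + r * Complex.exp (θ * Complex.I))) :=
        hcomm
      rw [holo_circle_integral F hFdiff p hr] at this
      simpa using this
    have hmp := max_principle (fun z => f z - (F z).re) c R hR
      (hf.sub ((Complex.continuous_re.comp hFdiff.continuous).continuousOn))
      ?_ 0 ?_
    · have hc0 := hmp c (Metric.mem_closedBall_self hR.le)
      have hFc : (F c).re = (1 / (2 * Real.pi)) *
          ∫ θ in (0:ℝ)..(2 * Real.pi), (F (c + R * Complex.exp (θ * Complex.I))).re := by
        rw [hFmean c R hR]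
        field_simp
      have hbound : ∀ θ : ℝ, (F (c + R * Complex.exp (θ * Complex.I))).re ≤ ψ θ + 2 * ε := by
        intro θ
        have h := abs_le.1 (hcc θ)
        rw [hFbd θ]
        linarith [h.1]
      have hFint2 : IntervalIntegrable
          (fun θ : ℝ => (F (c + R * Complex.exp (θ * Complex.I))).re) volume 0 (2 * Real.pi) :=
        ((Complex.continuous_re.comp hFdiff.continuous).comp (by fun_prop)).intervalIntegrable _ _
      have hmono := intervalIntegral.integral_mono_on hπ.le hFint2
        (hψint.add (_root_.intervalIntegrable_const (c := 2 * ε))) (fun θ _ => hbound θ)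
      rw [intervalIntegral.integral_add hψint (_root_.intervalIntegrable_const (c := 2*ε)),
        intervalIntegral.integral_const, sub_zero, smul_eq_mul] at hmono
      have : (F c).re ≤ ((1 / (2 * Real.pi)) *
          ∫ θ in (0:ℝ)..(2 * Real.pi), ψ θ) + 2 * ε := by
        rw [hFc]
        have hpos : 0 < 1 / (2 * Real.pi) := by positivity
        calc (1 / (2 * Real.pi)) *
            ∫ θ in (0:ℝ)..(2 * Real.pi), (F (c + R * Complex.exp (θ * Complex.I))).re
            ≤ (1 / (2 * Real.pi)) *
              ((∫ θ in (0:ℝ)..(2 * Real.pi), ψ θ) + 2 * Real.pi * (2 * ε)) := by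
              apply mul_le_mul_of_nonneg_left _ hpos.le
              linarith [hmono]
          _ = ((1 / (2 * Real.pi)) * ∫ θ in (0:ℝ)..(2 * Real.pi), ψ θ) + 2 * ε := by
              field_simp
      linarith [hc0, this]
    · intro p hp δ hδ
      obtain ⟨r, hr0, hrδ, hrsub, hrm⟩ := hsub p hp δ hδ
      refine ⟨r, hr0, hrδ, hrsub, ?_⟩
      have hcirc : ∀ θ : ℝ, p + r * Complex.exp (θ * Complex.I) ∈ Metric.closedBall c R := by
        intro θ
        apply Metric.ball_subset_closedBall
        apply hrsub
        rw [Metric.mem_closedBall, Complex.dist_eq]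
        have : p + r * Complex.exp (θ * Complex.I) - p = r * Complex.exp (θ * Complex.I) := by ring
        rw [this, norm_mul]
        simp [Complex.norm_exp, abs_of_pos hr0]
      have hfint : IntervalIntegrable (fun θ : ℝ => f (p + r * Complex.exp (θ * Complex.I)))
          volume 0 (2 * Real.pi) := circle_integrable' hf p r hcirc
      have hFint : IntervalIntegrable
          (fun θ : ℝ => (F (p + r * Complex.exp (θ * Complex.I))).re) volume 0 (2 * Real.pi) :=
        ((Complex.continuous_re.comp hFdiff.continuous).comp (by fun_prop)).intervalIntegrable _ _
      rw [intervalIntegral.integral_sub hfint hFint, hFmean p r hr0]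
      have hpos : 0 < 1 / (2 * Real.pi) := by positivity
      rw [mul_sub]
      have : (1 / (2 * Real.pi)) * (2 * Real.pi * (F p).re) = (F p).re := by
        field_simp
      rw [this]
      linarith [hrm]
    · intro q hq
      have habs : ‖q - c‖ = R := by
        rw [← Complex.dist_eq]; exact Metric.mem_sphere.1 hq
      have hw : (↑R : ℂ) * Complex.exp (↑(q - c).arg * Complex.I) = q - c := by
        have := Complex.norm_mul_exp_arg_mul_I (q - c)
        rwa [habs] at this
      have hqform : c + (↑R : ℂ) * Complex.exp (↑(q - c).arg * Complex.I) = q := by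
        rw [hw]; ring
      show f q - (F q).re ≤ 0
      rw [← hqform, hFbd]
      have h := abs_le.1 (hcc ((q - c).arg))
      simp only [hψdef] at h
      linarith [h.2]
  apply le_of_forall_pos_le_add
  intro ε hε
  have := key (ε / 2) (by positivity)
  linarith

lemma circle_pt_im (p : ℂ) (r θ : ℝ) :
    (p + r * Complex.exp (θ * Complex.I)).im = p.im + r * Real.sin θ := by
  simp [Complex.add_im, Complex.mul_im, Complex.exp_ofReal_mul_I_re, Complex.exp_ofReal_mul_I_im]

lemma circle_pt_mem_cb (p : ℂ) {r : ℝ} (hr : 0 ≤ r) (θ : ℝ) :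
    p + r * Complex.exp (θ * Complex.I) ∈ Metric.closedBall p r := by
  rw [Metric.mem_closedBall, Complex.dist_eq]
  have : p + r * Complex.exp (θ * Complex.I) - p = r * Complex.exp (θ * Complex.I) := by ring
  rw [this, norm_mul]
  simp [Complex.norm_exp, _root_.abs_of_nonneg hr]

lemma cb_im {p x : ℂ} {r : ℝ} (hx : x ∈ Metric.closedBall p r) : |x.im - p.im| ≤ r := by
  have h1 := Complex.abs_im_le_norm (x - p)
  rw [Complex.sub_im] at h1
  exact h1.trans (by rw [← Complex.dist_eq]; exact Metric.mem_closedBall.1 hx)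

end SubhGlue

open SubhGlue Metric Complex intervalIntegral MeasureTheory

theorem subharmonic_gluing_across_real_axis
    (h : ℝ) (hh : 0 < h) (u : ℂ → ℝ)
    (hcont : ContinuousOn u {z : ℂ | |z.im| < h})
    (hupper : IsSubharmonicOn u {z : ℂ | 0 < z.im ∧ z.im < h})
    (hlower : IsSubharmonicOn u {z : ℂ | -h < z.im ∧ z.im < 0})
    (hreal : ∀ x : ℝ, u (x : ℂ) = 0)
    (hm : ℕ → ℝ) (hm_anti : StrictAnti hm)
    (hm_mem : ∀ m : ℕ, 0 < hm m ∧ hm m < h)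
    (hm_lim : Tendsto hm atTop (nhds 0))
    (hm_nonneg : ∀ m : ℕ, ∀ z : ℂ, z.im = hm m ∨ z.im = -(hm m) → 0 ≤ u z) :
    IsSubharmonicOn u {z : ℂ | |z.im| < h} := by
  have hπ : (0:ℝ) < 2 * Real.pi := by positivity
  set S : Set ℂ := {z : ℂ | |z.im| < h} with hSdef
  constructor
  · intro x hx y hy
    exact (hcont x hx) (Iio_mem_nhds hy)
  · intro z₀ hz₀ ρ hρ hball
    -- geometry: the closed ball is well inside the strip
    have hb1 : |z₀.im + ρ| < h := by
      have hmem : z₀ + Complex.I * ρ ∈ Metric.closedBall z₀ ρ := by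
        rw [Metric.mem_closedBall, Complex.dist_eq]
        have : z₀ + Complex.I * ρ - z₀ = Complex.I * ρ := by ring
        rw [this, norm_mul]
        simp [abs_of_pos hρ]
      have := hball hmem
      simp only [hSdef, Set.mem_setOf_eq] at this
      simpa using this
    have hb2 : |z₀.im - ρ| < h := by
      have hmem : z₀ - Complex.I * ρ ∈ Metric.closedBall z₀ ρ := by
        rw [Metric.mem_closedBall, Complex.dist_eq]
        have : z₀ - Complex.I * ρ - z₀ = -(Complex.I * ρ) := by ring
        rw [this, norm_neg, norm_mul]
        simp [abs_of_pos hρ]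
      have := hball hmem
      simp only [hSdef, Set.mem_setOf_eq] at this
      simpa using this
    have him : |z₀.im| + ρ < h := by
      rw [abs_lt] at hb1 hb2
      rcases abs_cases z₀.im with ⟨he, _⟩ | ⟨he, _⟩ <;> rw [he] <;> linarith
    set b : ℝ := |z₀.im| + ρ with hbdef
    have hbρ : ρ ≤ b := by
      have := abs_nonneg z₀.im
      simp only [hbdef]; linarith
    -- the compact set for uniform continuity
    set K : Set ℂ := Metric.closedBall z₀ ρ ∪ Metric.closedBall (↑z₀.re : ℂ) b with hKdef
    have hKS : K ⊆ S := by
      rintro x (hx | hx)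
      · exact hball hx
      · have h1 : |x.im - 0| ≤ b := by
          have := cb_im hx
          simpa using this
        simp only [hSdef, Set.mem_setOf_eq]
        rw [sub_zero] at h1
        linarith
    have hKcpt : IsCompact K := (isCompact_closedBall _ _).union (isCompact_closedBall _ _)
    have hKu : UniformContinuousOn u K :=
      hKcpt.uniformContinuousOn_of_continuous (hcont.mono hKS)
    apply le_of_forall_pos_le_add
    intro ε hε
    obtain ⟨δ, hδ0, hδu⟩ := Metric.uniformContinuousOn_iff.1 hKu ε hε
    obtain ⟨m, hmδ⟩ := (hm_lim.eventually_lt_const hδ0).exists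
    set a : ℝ := hm m with hadef
    have ha0 : 0 < a := (hm_mem m).1
    have hah : a < h := (hm_mem m).2
    -- the modified function
    set w : ℂ → ℝ := fun z => if |z.im| ≤ a then max (u z) 0 else u z with hwdef
    have hwu : ∀ z, u z ≤ w z := by
      intro z
      simp only [hwdef]
      split_ifs
      · exact le_max_left _ _
      · exact le_refl _
    have hw0 : ∀ z, |z.im| ≤ a → 0 ≤ w z := by
      intro z hz
      simp only [hwdef, if_pos hz]
      exact le_max_right _ _
    -- continuity of w on S
    have hwS : ContinuousOn w S := by
      intro p hp
      rcases lt_trichotomy |p.im| a with hlt | heq | hgt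
      · have hV : IsOpen {z : ℂ | |z.im| < a} := isOpen_lt (Complex.continuous_im.abs)
          continuous_const
        refine ContinuousWithinAt.congr_of_eventuallyEq
          (((hcont p hp).max continuousWithinAt_const)) ?_ (if_pos hlt.le)
        exact Filter.eventuallyEq_of_mem
          (mem_nhdsWithin_of_mem_nhds (hV.mem_nhds hlt)) (fun z hz => if_pos hz.le)
      · -- |p.im| = a
        have hpa : p.im = a ∨ p.im = -a := abs_eq ha0.le |>.1 heq
        have hup : 0 ≤ u p := hm_nonneg m p hpa
        have hwp : w p = u p := by
          simp only [hwdef, if_pos heq.le]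
          exact max_eq_left hup
        have hbd : ∀ z, dist (w z) (w p) ≤ dist (u z) (u p) := by
          intro z
          rw [Real.dist_eq, Real.dist_eq, hwp]
          by_cases hz : |z.im| ≤ a
          · simp only [hwdef, if_pos hz]
            calc |max (u z) 0 - u p| = |max (u z) 0 - max (u p) 0| := by
                  rw [max_eq_left hup]
              _ ≤ |u z - u p| := abs_max_sub_max_le_abs _ _ _
          · simp only [hwdef, if_neg hz]
            exact le_refl _
        rw [ContinuousWithinAt, tendsto_iff_dist_tendsto_zero]
        apply squeeze_zero (fun z => dist_nonneg) hbd
        exact tendsto_iff_dist_tendsto_zero.1 (hcont p hp)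
      · have hV : IsOpen {z : ℂ | a < |z.im|} := isOpen_lt continuous_const
          (Complex.continuous_im.abs)
        refine ContinuousWithinAt.congr_of_eventuallyEq
          (hcont p hp) ?_ (if_neg (not_le.2 hgt))
        exact Filter.eventuallyEq_of_mem
          (mem_nhdsWithin_of_mem_nhds (hV.mem_nhds hgt)) (fun z hz => if_neg (not_le.2 hz))
    -- helper: compare u-mean with w-mean
    have hUW : ∀ (p : ℂ) (r : ℝ), 0 < r →
        (∀ θ : ℝ, p + r * Complex.exp (θ * Complex.I) ∈ S) →
        ((1 / (2 * Real.pi)) *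
            ∫ θ in (0:ℝ)..(2 * Real.pi), u (p + r * Complex.exp (θ * Complex.I)))
          ≤ (1 / (2 * Real.pi)) *
            ∫ θ in (0:ℝ)..(2 * Real.pi), w (p + r * Complex.exp (θ * Complex.I)) := by
      intro p r hr hcS
      have hui := circle_integrable' hcont p r hcS
      have hwi := circle_integrable' hwS p r hcS
      have := intervalIntegral.integral_mono_on hπ.le hui hwi (fun θ _ => hwu _)
      apply mul_le_mul_of_nonneg_left this (by positivity)
    have hW0 : ∀ (p : ℂ) (r : ℝ),
        (∀ θ : ℝ, |(p + r * Complex.exp (θ * Complex.I)).im| ≤ a) →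
        0 ≤ (1 / (2 * Real.pi)) *
            ∫ θ in (0:ℝ)..(2 * Real.pi), w (p + r * Complex.exp (θ * Complex.I)) := by
      intro p r hcirc
      apply mul_nonneg (by positivity)
      apply intervalIntegral.integral_nonneg hπ.le
      intro θ _
      exact hw0 _ (hcirc θ)
    -- submean from the upper half-strip
    have hUp : ∀ (p : ℂ) (r : ℝ), 0 < r → r < p.im → p.im + r < h →
        u p ≤ (1 / (2 * Real.pi)) *
          ∫ θ in (0:ℝ)..(2 * Real.pi), u (p + r * Complex.exp (θ * Complex.I)) := by
      intro p r hr h1 h2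
      apply hupper.2 p (by
        simp only [Set.mem_setOf_eq]
        constructor <;> linarith) r hr
      intro x hx
      have := cb_im hx
      rw [abs_le] at this
      simp only [Set.mem_setOf_eq]
      constructor <;> linarith
    have hLo : ∀ (p : ℂ) (r : ℝ), 0 < r → r < -p.im → -h < p.im - r →
        u p ≤ (1 / (2 * Real.pi)) *
          ∫ θ in (0:ℝ)..(2 * Real.pi), u (p + r * Complex.exp (θ * Complex.I)) := by
      intro p r hr h1 h2
      apply hlower.2 p (by
        simp only [Set.mem_setOf_eq]
        constructor <;> linarith) r hr
      intro x hx
      have := cb_im hx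
      rw [abs_le] at this
      simp only [Set.mem_setOf_eq]
      constructor <;> linarith
    -- the local submean property of w
    have hwloc : ∀ p ∈ Metric.ball z₀ ρ, ∀ δ' > 0, ∃ r, 0 < r ∧ r < δ' ∧
        Metric.closedBall p r ⊆ Metric.ball z₀ ρ ∧
        w p ≤ (1 / (2 * Real.pi)) *
          ∫ θ in (0:ℝ)..(2 * Real.pi), w (p + r * Complex.exp (θ * Complex.I)) := by
      intro p hp δ' hδ'
      have hpS : p ∈ S := hball (Metric.ball_subset_closedBall hp)
      have hph : |p.im| < h := hpS
      rw [abs_lt] at hph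
      have he : 0 < ρ - dist p z₀ := by
        rw [Metric.mem_ball] at hp
        linarith
      rcases lt_trichotomy p.im 0 with hneg | hzero | hpos
      · -- lower half
        rcases lt_or_ge (-a) p.im with hca | hca
        · -- -a < p.im < 0
          set r := min (min (-p.im) (a + p.im)) (min (ρ - dist p z₀) δ') / 2 with hrdef
          have h2r : 2 * r = min (min (-p.im) (a + p.im)) (min (ρ - dist p z₀) δ') := by
            rw [hrdef]; ring
          have hm1 : min (min (-p.im) (a + p.im)) (min (ρ - dist p z₀) δ') ≤ -p.im :=
            (min_le_left _ _).trans (min_le_left _ _)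
          have hm2 : min (min (-p.im) (a + p.im)) (min (ρ - dist p z₀) δ') ≤ a + p.im :=
            (min_le_left _ _).trans (min_le_right _ _)
          have hm3 : min (min (-p.im) (a + p.im)) (min (ρ - dist p z₀) δ') ≤ ρ - dist p z₀ :=
            (min_le_right _ _).trans (min_le_left _ _)
          have hm4 : min (min (-p.im) (a + p.im)) (min (ρ - dist p z₀) δ') ≤ δ' :=
            (min_le_right _ _).trans (min_le_right _ _)
          have hr0 : 0 < r := by
            rw [hrdef]
            apply div_pos _ two_pos
            exact lt_min (lt_min (by linarith) (by linarith)) (lt_min he hδ')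
          have hcirc_im : ∀ θ : ℝ,
              |(p + r * Complex.exp (θ * Complex.I)).im - p.im| ≤ r := fun θ =>
            cb_im (circle_pt_mem_cb p hr0.le θ)
          have hcirca : ∀ θ : ℝ, |(p + r * Complex.exp (θ * Complex.I)).im| ≤ a := by
            intro θ
            have hb := abs_le.1 (hcirc_im θ)
            rw [abs_le]
            constructor <;> linarith
          have hcircS : ∀ θ : ℝ, p + r * Complex.exp (θ * Complex.I) ∈ S := by
            intro θ
            have := hcirca θ
            simp only [hSdef, Set.mem_setOf_eq]
            linarith
          refine ⟨r, hr0, by linarith, Metric.closedBall_subset_ball' (by linarith), ?_⟩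
          have hwp : w p = max (u p) 0 := by
            simp only [hwdef]
            rw [if_pos (by rw [_root_.abs_of_neg hneg]; linarith)]
          rw [hwp]
          apply max_le
          · exact (hLo p r hr0 (by linarith) (by linarith)).trans (hUW p r hr0 hcircS)
          · exact hW0 p r hcirca
        · -- p.im ≤ -a
          set r := min (min a (h + p.im)) (min (ρ - dist p z₀) δ') / 2 with hrdef
          have h2r : 2 * r = min (min a (h + p.im)) (min (ρ - dist p z₀) δ') := by
            rw [hrdef]; ring
          have hm1 : min (min a (h + p.im)) (min (ρ - dist p z₀) δ') ≤ a :=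
            (min_le_left _ _).trans (min_le_left _ _)
          have hm2 : min (min a (h + p.im)) (min (ρ - dist p z₀) δ') ≤ h + p.im :=
            (min_le_left _ _).trans (min_le_right _ _)
          have hm3 : min (min a (h + p.im)) (min (ρ - dist p z₀) δ') ≤ ρ - dist p z₀ :=
            (min_le_right _ _).trans (min_le_left _ _)
          have hm4 : min (min a (h + p.im)) (min (ρ - dist p z₀) δ') ≤ δ' :=
            (min_le_right _ _).trans (min_le_right _ _)
          have hr0 : 0 < r := by
            rw [hrdef]
            apply div_pos _ two_pos
            exact lt_min (lt_min ha0 (by linarith)) (lt_min he hδ')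
          have hcirc_im : ∀ θ : ℝ,
              |(p + r * Complex.exp (θ * Complex.I)).im - p.im| ≤ r := fun θ =>
            cb_im (circle_pt_mem_cb p hr0.le θ)
          have hcircS : ∀ θ : ℝ, p + r * Complex.exp (θ * Complex.I) ∈ S := by
            intro θ
            have hb := abs_le.1 (hcirc_im θ)
            simp only [hSdef, Set.mem_setOf_eq]
            rw [abs_lt]
            constructor <;> linarith
          refine ⟨r, hr0, by linarith, Metric.closedBall_subset_ball' (by linarith), ?_⟩
          have hwp : w p = u p := by
            rcases eq_or_lt_of_le hca with heq | hlt
            · simp only [hwdef]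
              rw [if_pos (by rw [_root_.abs_of_neg hneg]; linarith)]
              exact max_eq_left (hm_nonneg m p (Or.inr (by linarith)))
            · simp only [hwdef]
              rw [if_neg (by rw [_root_.abs_of_neg hneg]; exact not_le.2 (by linarith))]
          rw [hwp]
          exact (hLo p r hr0 (by linarith) (by linarith)).trans (hUW p r hr0 hcircS)
      · -- p.im = 0
        set r := min (min a a) (min (ρ - dist p z₀) δ') / 2 with hrdef
        have h2r : 2 * r = min (min a a) (min (ρ - dist p z₀) δ') := by
          rw [hrdef]; ring
        have hm1 : min (min a a) (min (ρ - dist p z₀) δ') ≤ a :=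
          (min_le_left _ _).trans (min_le_left _ _)
        have hm3 : min (min a a) (min (ρ - dist p z₀) δ') ≤ ρ - dist p z₀ :=
          (min_le_right _ _).trans (min_le_left _ _)
        have hm4 : min (min a a) (min (ρ - dist p z₀) δ') ≤ δ' :=
          (min_le_right _ _).trans (min_le_right _ _)
        have hr0 : 0 < r := by
          rw [hrdef]
          apply div_pos _ two_pos
          exact lt_min (lt_min ha0 ha0) (lt_min he hδ')
        have hcirc_im : ∀ θ : ℝ,
            |(p + r * Complex.exp (θ * Complex.I)).im - p.im| ≤ r := fun θ =>
          cb_im (circle_pt_mem_cb p hr0.le θ)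
        have hcirca : ∀ θ : ℝ, |(p + r * Complex.exp (θ * Complex.I)).im| ≤ a := by
          intro θ
          have hb := hcirc_im θ
          rw [hzero, sub_zero] at hb
          linarith
        refine ⟨r, hr0, by linarith, Metric.closedBall_subset_ball' (by linarith), ?_⟩
        have hup : u p = 0 := by
          have hpre : p = ((p.re : ℝ) : ℂ) := Complex.ext rfl (by simp [hzero])
          rw [hpre]
          exact hreal p.re
        have hwp : w p = 0 := by
          simp only [hwdef]
          rw [if_pos (by rw [hzero]; simp [ha0.le]), hup]
          simp
        rw [hwp]
        exact hW0 p r hcirca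
      · -- upper half
        rcases lt_or_ge p.im a with hca | hca
        · -- 0 < p.im < a
          set r := min (min p.im (a - p.im)) (min (ρ - dist p z₀) δ') / 2 with hrdef
          have h2r : 2 * r = min (min p.im (a - p.im)) (min (ρ - dist p z₀) δ') := by
            rw [hrdef]; ring
          have hm1 : min (min p.im (a - p.im)) (min (ρ - dist p z₀) δ') ≤ p.im :=
            (min_le_left _ _).trans (min_le_left _ _)
          have hm2 : min (min p.im (a - p.im)) (min (ρ - dist p z₀) δ') ≤ a - p.im :=
            (min_le_left _ _).trans (min_le_right _ _)
          have hm3 : min (min p.im (a - p.im)) (min (ρ - dist p z₀) δ') ≤ ρ - dist p z₀ :=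
            (min_le_right _ _).trans (min_le_left _ _)
          have hm4 : min (min p.im (a - p.im)) (min (ρ - dist p z₀) δ') ≤ δ' :=
            (min_le_right _ _).trans (min_le_right _ _)
          have hr0 : 0 < r := by
            rw [hrdef]
            apply div_pos _ two_pos
            exact lt_min (lt_min hpos (by linarith)) (lt_min he hδ')
          have hcirc_im : ∀ θ : ℝ,
              |(p + r * Complex.exp (θ * Complex.I)).im - p.im| ≤ r := fun θ =>
            cb_im (circle_pt_mem_cb p hr0.le θ)
          have hcirca : ∀ θ : ℝ, |(p + r * Complex.exp (θ * Complex.I)).im| ≤ a := by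
            intro θ
            have hb := abs_le.1 (hcirc_im θ)
            rw [abs_le]
            constructor <;> linarith
          have hcircS : ∀ θ : ℝ, p + r * Complex.exp (θ * Complex.I) ∈ S := by
            intro θ
            have := hcirca θ
            simp only [hSdef, Set.mem_setOf_eq]
            linarith
          refine ⟨r, hr0, by linarith, Metric.closedBall_subset_ball' (by linarith), ?_⟩
          have hwp : w p = max (u p) 0 := by
            simp only [hwdef]
            rw [if_pos (by rw [_root_.abs_of_pos hpos]; linarith)]
          rw [hwp]
          apply max_le
          · exact (hUp p r hr0 (by linarith) (by linarith)).trans (hUW p r hr0 hcircS)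
          · exact hW0 p r hcirca
        · -- a ≤ p.im
          set r := min (min a (h - p.im)) (min (ρ - dist p z₀) δ') / 2 with hrdef
          have h2r : 2 * r = min (min a (h - p.im)) (min (ρ - dist p z₀) δ') := by
            rw [hrdef]; ring
          have hm1 : min (min a (h - p.im)) (min (ρ - dist p z₀) δ') ≤ a :=
            (min_le_left _ _).trans (min_le_left _ _)
          have hm2 : min (min a (h - p.im)) (min (ρ - dist p z₀) δ') ≤ h - p.im :=
            (min_le_left _ _).trans (min_le_right _ _)
          have hm3 : min (min a (h - p.im)) (min (ρ - dist p z₀) δ') ≤ ρ - dist p z₀ :=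
            (min_le_right _ _).trans (min_le_left _ _)
          have hm4 : min (min a (h - p.im)) (min (ρ - dist p z₀) δ') ≤ δ' :=
            (min_le_right _ _).trans (min_le_right _ _)
          have hr0 : 0 < r := by
            rw [hrdef]
            apply div_pos _ two_pos
            exact lt_min (lt_min ha0 (by linarith)) (lt_min he hδ')
          have hcirc_im : ∀ θ : ℝ,
              |(p + r * Complex.exp (θ * Complex.I)).im - p.im| ≤ r := fun θ =>
            cb_im (circle_pt_mem_cb p hr0.le θ)
          have hcircS : ∀ θ : ℝ, p + r * Complex.exp (θ * Complex.I) ∈ S := by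
            intro θ
            have hb := abs_le.1 (hcirc_im θ)
            simp only [hSdef, Set.mem_setOf_eq]
            rw [abs_lt]
            constructor <;> linarith
          refine ⟨r, hr0, by linarith, Metric.closedBall_subset_ball' (by linarith), ?_⟩
          have hwp : w p = u p := by
            rcases eq_or_lt_of_le hca with heq | hlt
            · simp only [hwdef]
              rw [if_pos (by rw [_root_.abs_of_pos hpos, ← heq])]
              exact max_eq_left (hm_nonneg m p (Or.inl heq.symm))
            · simp only [hwdef]
              rw [if_neg (by rw [_root_.abs_of_pos hpos]; exact not_le.2 hlt)]
          rw [hwp]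
          exact (hUp p r hr0 (by linarith) (by linarith)).trans (hUW p r hr0 hcircS)
    -- apply the global sub-mean lemma to w and pass to the limit
    have hglob := global_submean w z₀ ρ hρ (hwS.mono hball) hwloc
    have hcirc₀ : ∀ θ : ℝ, z₀ + ρ * Complex.exp (θ * Complex.I) ∈ Metric.closedBall z₀ ρ :=
      circle_pt_mem_cb z₀ hρ.le
    have hwint := circle_integrable' (hwS.mono hball) z₀ ρ hcirc₀
    have huint := circle_integrable' (hcont.mono hball) z₀ ρ hcirc₀
    have hW2 : ∀ ζ ∈ Metric.closedBall z₀ ρ, w ζ ≤ u ζ + ε := by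
      intro ζ hζ
      by_cases hc : |ζ.im| ≤ a
      · have hζK : ζ ∈ K := Or.inl hζ
        have hre_mem : (↑ζ.re : ℂ) ∈ K := by
          right
          rw [Metric.mem_closedBall]
          have h1 : dist (↑ζ.re : ℂ) (↑z₀.re : ℂ) = |ζ.re - z₀.re| := by
            rw [Complex.dist_eq, ← Complex.ofReal_sub]
            exact (Complex.norm_real _).trans (Real.norm_eq_abs _)
          rw [h1]
          have h2 : |ζ.re - z₀.re| ≤ ‖ζ - z₀‖ := by
            have := Complex.abs_re_le_norm (ζ - z₀)
            rwa [Complex.sub_re] at this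
          have h3 : ‖ζ - z₀‖ ≤ ρ := by
            rw [← Complex.dist_eq]
            exact Metric.mem_closedBall.1 hζ
          linarith [hbρ]
        have hdist : dist ζ (↑ζ.re : ℂ) < δ := by
          rw [Complex.dist_eq]
          have hd1 : ζ - ↑ζ.re = ↑ζ.im * Complex.I := by
            apply Complex.ext <;> simp
          rw [hd1, norm_mul]
          simp only [Complex.norm_real, Real.norm_eq_abs, Complex.norm_I, mul_one]
          calc |ζ.im| ≤ a := hc
            _ < δ := hmδ
        have hud := hδu ζ hζK _ hre_mem hdist
        rw [Real.dist_eq, hreal ζ.re, sub_zero] at hud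
        have habs := abs_lt.1 hud
        simp only [hwdef, if_pos hc]
        apply max_le (by linarith) (by linarith)
      · simp only [hwdef, if_neg hc]
        linarith
    have hmono := intervalIntegral.integral_mono_on hπ.le hwint
      (huint.add (_root_.intervalIntegrable_const (c := ε)))
      (fun θ _ => hW2 _ (hcirc₀ θ))
    rw [intervalIntegral.integral_add huint (_root_.intervalIntegrable_const (c := ε)),
      intervalIntegral.integral_const, sub_zero, smul_eq_mul] at hmono
    calc u z₀ ≤ w z₀ := hwu z₀
      _ ≤ (1 / (2 * Real.pi)) *
          ∫ θ in (0:ℝ)..(2 * Real.pi), w (z₀ + ρ * Complex.exp (θ * Complex.I)) := hglob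
      _ ≤ (1 / (2 * Real.pi)) *
          ((∫ θ in (0:ℝ)..(2 * Real.pi), u (z₀ + ρ * Complex.exp (θ * Complex.I)))
            + 2 * Real.pi * ε) := by
          apply mul_le_mul_of_nonneg_left _ (by positivity)
          linarith [hmono]
      _ = (1 / (2 * Real.pi)) *
          (∫ θ in (0:ℝ)..(2 * Real.pi), u (z₀ + ρ * Complex.exp (θ * Complex.I))) + ε := by
          rw [mul_add, one_div, inv_mul_cancel_left₀ hπ.ne']

end
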